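/- Let R be a discrete valuation ring with maximal ideal 𝔪 and fraction field F, and let W and Y be nonzero finite-dimensional F-vector spaces. Let e, e_W, r_Y be positive integers with e_W ∣ e, 2e_W ∣ e and r_Y ∣ e. Let Λ_{W,0} and Λ_{W,1} be principal R-lattice sequences in W of period e whose sets of jumps are (e/e_W)·ℤ and e/(2e_W) + (e/e_W)·ℤ respectively, and let Λ_Y be a principal R-lattice sequence in Y of period e with set of jumps a_Y + (e/r_Y)·ℤ. For t = 0, 1 let 𝒞_t = 𝒞(Λ_Y, Λ_{W,t}) be the lattice sequence in Hom_F(Y, W) defined by 𝒞_t(s) = {g : g(Λ_Y(i)) ⊆ Λ_{W,t}(i + s) for all i}. Then 𝒞_0 and 𝒞_1 have the same set of jumps if and only if v₂(e_W) < v₂(r_Y), where v₂ denotes the 2-adic valuation; otherwise, the set of jumps of 𝒞_1 equals the set of jumps of 𝒞_0 shifted by (1/2)·gcd(e/r_Y, e/e_W). -/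

import Mathlib

/-- A jump of a family of submodules indexed by `ℤ`. -/
def IsJump {R W : Type*} [Semiring R] [AddCommMonoid W] [Module R W]
    (Λ : ℤ → Submodule R W) (t : ℤ) : Prop :=
  Λ t ≠ Λ (t + 1)

section LatticeSequences

variable (R F : Type*) [CommRing R] [IsLocalRing R] [Field F] [Algebra R F]
variable {W Y : Type*}
variable [AddCommGroup W] [Module R W] [Module F W] [IsScalarTower R F W]
variable [AddCommGroup Y] [Module R Y] [Module F Y] [IsScalarTower R F Y]

/-- An `R`-lattice in an `F`-vector space: a finitely generated `R`-submodule
spanning the whole space over `F`. -/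
def IsLatticeIn (L : Submodule R W) : Prop :=
  L.FG ∧ Submodule.span F (L : Set W) = ⊤

/-- An `R`-lattice sequence of period `e`: a decreasing `ℤ`-indexed family of lattices
with `Λ(t + e) = 𝔪 · Λ(t)` for the maximal ideal `𝔪` of `R`. -/
structure IsLatticeSequence (Λ : ℤ → Submodule R W) (e : ℕ) : Prop where
  lattice : ∀ t : ℤ, IsLatticeIn R F (Λ t)
  decreasing : ∀ t : ℤ, Λ (t + 1) ≤ Λ t
  period : ∀ t : ℤ, Λ (t + (e : ℤ)) = (IsLocalRing.maximalIdeal R) • Λ t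

/-- A lattice sequence is principal if some `F`-linear automorphism carries `Λ(i)`
onto `Λ(i+1)` for every jump `i`. -/
def IsPrincipalSequence (Λ : ℤ → Submodule R W) : Prop :=
  ∃ P : W ≃ₗ[F] W, ∀ i : ℤ, IsJump Λ i →
    (Λ i).map (LinearMap.restrictScalars R (P : W →ₗ[F] W)) = Λ (i + 1)

/-- The lattice sequence `𝒞(Λ_Y, Λ_W)` in `Hom_F(Y, W)`:
`𝒞(t) = {g | g(Λ_Y(i)) ⊆ Λ_W(i + t) for all i}`. -/
def homLatticeSeq (ΛY : ℤ → Submodule R Y) (ΛW : ℤ → Submodule R W) (t : ℤ) :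
    Submodule R (Y →ₗ[F] W) where
  carrier := {f | ∀ i : ℤ, ∀ y ∈ ΛY i, f y ∈ ΛW (i + t)}
  add_mem' := by
    intro f₁ f₂ h₁ h₂ i y hy
    simpa using add_mem (h₁ i y hy) (h₂ i y hy)
  zero_mem' := by
    intro i y hy
    simp
  smul_mem' := by
    intro c f hf i y hy
    simpa using Submodule.smul_mem _ c (hf i y hy)

end LatticeSequences



/- ====================  auxiliary lemmas  ==================== -/

section AuxGen

/-- If a family has no jumps on `[a, b)` then it is constant there. -/
lemma const_of_no_jump {R W : Type*} [Semiring R] [AddCommMonoid W] [Module R W]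
    (Λ : ℤ → Submodule R W) (a b : ℤ) (hab : a ≤ b)
    (h : ∀ t, a ≤ t → t < b → ¬ IsJump Λ t) : Λ a = Λ b := by
  obtain ⟨n, hn⟩ := Int.le.dest hab
  induction n generalizing b with
  | zero => rw [← hn]; simp
  | succ n ih =>
    have h1 : Λ a = Λ (b - 1) := ih (b - 1) (by omega)
      (fun t ht1 ht2 => h t ht1 (by omega)) (by omega)
    have h2 : ¬ IsJump Λ (b - 1) := h (b - 1) (by omega) (by omega)
    have h3 : Λ (b - 1) = Λ (b - 1 + 1) := not_not.mp h2
    rw [h1, h3, show b - 1 + 1 = b by ring]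

/-- Iterating a one-step translation invariance of a predicate on `ℤ`. -/
lemma iterate_iff (J : ℤ → Prop) (m : ℤ) (h : ∀ t, J t ↔ J (t + m)) :
    ∀ (u : ℤ) (t : ℤ), J t ↔ J (t + u * m) := by
  intro u
  induction u using Int.induction_on with
  | zero => simp
  | succ i ih =>
    intro t
    have := (ih t).trans (h (t + i * m))
    rwa [show t + (i : ℤ) * m + m = t + ((i : ℤ) + 1) * m by ring] at this
  | pred i ih =>
    intro t
    have := h (t + (-(i : ℤ) - 1) * m)
    rw [show t + (-(i : ℤ) - 1) * m + m = t + (-(i : ℤ)) * m by ring] at this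
    exact (ih t).trans this.symm

end AuxGen

section AuxMain
open Pointwise
set_option linter.unusedSectionVars false

variable {R F : Type*} [CommRing R] [IsDomain R] [IsDiscreteValuationRing R]
  [Field F] [Algebra R F] [IsFractionRing R F]
  {W Y : Type*}
  [AddCommGroup W] [Module R W] [Module F W] [IsScalarTower R F W]
  [AddCommGroup Y] [Module R Y] [Module F Y] [IsScalarTower R F Y]

lemma mem_homLatticeSeq {ΛY : ℤ → Submodule R Y} {ΛW : ℤ → Submodule R W} {t : ℤ}
    {f : Y →ₗ[F] W} :
    f ∈ homLatticeSeq R F ΛY ΛW t ↔ ∀ i : ℤ, ∀ y ∈ ΛY i, f y ∈ ΛW (i + t) :=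
  Iff.rfl

lemma mem_map_equiv' (P : W ≃ₗ[F] W) (M : Submodule R W) (x : W) :
    P x ∈ M.map (LinearMap.restrictScalars R (P : W →ₗ[F] W)) ↔ x ∈ M := by
  constructor
  · rintro ⟨x', hx', hxe⟩
    have : x' = x := P.injective (by simpa using hxe)
    rwa [this] at hx'
  · intro hx
    exact ⟨x, hx, rfl⟩

/-- If the jump set of `Λ` is `c + mℤ` and `P` carries `Λ i` to `Λ (i+1)` at each
jump, then `P` carries `Λ i` to `Λ (i + m)` for every `i`. -/
lemma map_eq_of_jumpset (Λ : ℤ → Submodule R W) (P : W ≃ₗ[F] W) (m : ℕ) (hm : 0 < m)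
    (c : ℤ) (hj : ∀ t, IsJump Λ t ↔ ∃ z : ℤ, t = c + (m : ℤ) * z)
    (hP : ∀ i : ℤ, IsJump Λ i →
      (Λ i).map (LinearMap.restrictScalars R (P : W →ₗ[F] W)) = Λ (i + 1)) :
    ∀ i : ℤ, (Λ i).map (LinearMap.restrictScalars R (P : W →ₗ[F] W)) = Λ (i + (m : ℤ)) := by
  intro i
  have hm' : (0 : ℤ) < (m : ℤ) := by exact_mod_cast hm
  set j := i + (c - i) % (m : ℤ) with hjdef
  have h1 : 0 ≤ (c - i) % (m : ℤ) := Int.emod_nonneg _ (by omega)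
  have h2 : (c - i) % (m : ℤ) < m := Int.emod_lt_of_pos _ hm'
  have hcj : ∃ z : ℤ, j = c + (m : ℤ) * z :=
    ⟨-((c - i) / (m : ℤ)), by rw [hjdef, Int.emod_def]; ring⟩
  obtain ⟨z0, hz0⟩ := hcj
  have hij : i ≤ j := by omega
  have hjm : j < i + (m : ℤ) := by omega
  have hnj1 : ∀ t, i ≤ t → t < j → ¬ IsJump Λ t := by
    intro t ht1 ht2 hjump
    obtain ⟨z, hz⟩ := (hj t).mp hjump
    have hd : t - j = (m : ℤ) * (z - z0) := by rw [hz, hz0]; ring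
    rcases lt_or_ge z z0 with h' | h'
    · have h5 : (m : ℤ) * (z - z0) ≤ (m : ℤ) * (-1) :=
        mul_le_mul_of_nonneg_left (by omega) (by omega)
      have h6 : (m : ℤ) * (-1) = -(m : ℤ) := by ring
      linarith
    · have h5 : (0 : ℤ) ≤ (m : ℤ) * (z - z0) :=
        mul_nonneg (by omega) (by omega)
      linarith
  have hnj2 : ∀ t, j + 1 ≤ t → t < j + (m : ℤ) → ¬ IsJump Λ t := by
    intro t ht1 ht2 hjump
    obtain ⟨z, hz⟩ := (hj t).mp hjump
    have hd : t - j = (m : ℤ) * (z - z0) := by rw [hz, hz0]; ring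
    rcases lt_or_ge z0 z with h' | h'
    · have h5 : (m : ℤ) * 1 ≤ (m : ℤ) * (z - z0) :=
        mul_le_mul_of_nonneg_left (by omega) (by omega)
      have h6 : (m : ℤ) * 1 = (m : ℤ) := by ring
      linarith
    · have h5 : (m : ℤ) * (z - z0) ≤ 0 :=
        mul_nonpos_of_nonneg_of_nonpos (by omega) (by omega)
      linarith
  have hnj3 : ∀ t, i + (m : ℤ) ≤ t → t < j + (m : ℤ) → ¬ IsJump Λ t := by
    intro t ht1 ht2 hjump
    obtain ⟨z, hz⟩ := (hj t).mp hjump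
    refine hnj1 (t - m) (by omega) (by omega) ?_
    exact (hj (t - m)).mpr ⟨z - 1, by rw [hz]; ring⟩
  have e1 : Λ i = Λ j := const_of_no_jump Λ i j hij hnj1
  have hjj : IsJump Λ j := (hj j).mpr ⟨z0, hz0⟩
  have e2 : Λ (j + 1) = Λ (j + (m : ℤ)) :=
    const_of_no_jump Λ (j + 1) (j + (m : ℤ)) (by omega) hnj2
  have e3 : Λ (i + (m : ℤ)) = Λ (j + (m : ℤ)) :=
    const_of_no_jump Λ (i + (m : ℤ)) (j + (m : ℤ)) (by omega)
      (fun t h1 h2 => hnj3 t h1 h2)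
  rw [e1, hP j hjj, e2, e3]


/-- Translation of jumps of the hom lattice sequence coming from the `W` side. -/
lemma jump_translate_W (ΛY : ℤ → Submodule R Y) (ΛW : ℤ → Submodule R W)
    (P : W ≃ₗ[F] W) (m : ℤ)
    (hP : ∀ i : ℤ, (ΛW i).map (LinearMap.restrictScalars R (P : W →ₗ[F] W)) = ΛW (i + m)) :
    ∀ t, IsJump (homLatticeSeq R F ΛY ΛW) t ↔ IsJump (homLatticeSeq R F ΛY ΛW) (t + m) := by
  have key : ∀ (f : Y →ₗ[F] W) (t : ℤ),
      f ∈ homLatticeSeq R F ΛY ΛW t ↔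
      ((P : W →ₗ[F] W) ∘ₗ f) ∈ homLatticeSeq R F ΛY ΛW (t + m) := by
    intro f t
    constructor
    · intro h i y hy
      have h1 : f y ∈ ΛW (i + t) := h i y hy
      have h2 : P (f y) ∈ (ΛW (i + t)).map
          (LinearMap.restrictScalars R (P : W →ₗ[F] W)) :=
        (mem_map_equiv' P _ _).mpr h1
      rw [hP] at h2
      simpa [show i + t + m = i + (t + m) by ring] using h2
    · intro h i y hy
      have h1 : P (f y) ∈ ΛW (i + (t + m)) := h i y hy
      rw [show i + (t + m) = (i + t) + m by ring, ← hP] at h1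
      exact (mem_map_equiv' P _ _).mp h1
  have key' : ∀ (f : Y →ₗ[F] W) (t : ℤ),
      f ∈ homLatticeSeq R F ΛY ΛW (t + m) ↔
      ((P.symm : W →ₗ[F] W) ∘ₗ f) ∈ homLatticeSeq R F ΛY ΛW t := by
    intro f t
    have := key ((P.symm : W →ₗ[F] W) ∘ₗ f) t
    have heq : (P : W →ₗ[F] W) ∘ₗ ((P.symm : W →ₗ[F] W) ∘ₗ f) = f := by
      ext y; simp
    rw [heq] at this
    exact this.symm
  intro t
  have main : (homLatticeSeq R F ΛY ΛW t = homLatticeSeq R F ΛY ΛW (t + 1)) ↔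
      (homLatticeSeq R F ΛY ΛW (t + m) = homLatticeSeq R F ΛY ΛW (t + m + 1)) := by
    constructor
    · intro h
      apply Submodule.ext; intro f
      rw [key' f t, show t + m + 1 = (t + 1) + m by ring, key' f (t + 1), h]
    · intro h
      apply Submodule.ext; intro f
      rw [key f t, key f (t + 1), show (t + 1) + m = t + m + 1 by ring, h]
  exact not_congr main

/-- Translation of jumps of the hom lattice sequence coming from the `Y` side. -/
lemma jump_translate_Y (ΛY : ℤ → Submodule R Y) (ΛW : ℤ → Submodule R W)
    (Q : Y ≃ₗ[F] Y) (m : ℤ)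
    (hQ : ∀ i : ℤ, (ΛY i).map (LinearMap.restrictScalars R (Q : Y →ₗ[F] Y)) = ΛY (i + m)) :
    ∀ t, IsJump (homLatticeSeq R F ΛY ΛW) t ↔ IsJump (homLatticeSeq R F ΛY ΛW) (t + m) := by
  have key : ∀ (f : Y →ₗ[F] W) (t : ℤ),
      f ∈ homLatticeSeq R F ΛY ΛW t ↔
      (f ∘ₗ (Q : Y →ₗ[F] Y)) ∈ homLatticeSeq R F ΛY ΛW (t + m) := by
    intro f t
    constructor
    · intro h i y hy
      have h1 : Q y ∈ ΛY (i + m) := by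
        rw [← hQ i]
        exact (mem_map_equiv' Q _ _).mpr hy
      have h2 : f (Q y) ∈ ΛW ((i + m) + t) := h (i + m) _ h1
      simpa [show (i + m) + t = i + (t + m) by ring] using h2
    · intro h i y hy
      have h1 : y ∈ (ΛY (i - m)).map (LinearMap.restrictScalars R (Q : Y →ₗ[F] Y)) := by
        rw [hQ]
        simpa [show i - m + m = i by ring] using hy
      obtain ⟨x, hx, hxe⟩ := h1
      have h2 : f (Q x) ∈ ΛW ((i - m) + (t + m)) := h (i - m) x hx
      have hxe' : Q x = y := hxe
      rw [hxe'] at h2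
      simpa [show (i - m) + (t + m) = i + t by ring] using h2
  have key' : ∀ (f : Y →ₗ[F] W) (t : ℤ),
      f ∈ homLatticeSeq R F ΛY ΛW (t + m) ↔
      (f ∘ₗ (Q.symm : Y →ₗ[F] Y)) ∈ homLatticeSeq R F ΛY ΛW t := by
    intro f t
    have := key (f ∘ₗ (Q.symm : Y →ₗ[F] Y)) t
    have heq : (f ∘ₗ (Q.symm : Y →ₗ[F] Y)) ∘ₗ (Q : Y →ₗ[F] Y) = f := by
      ext y; simp
    rw [heq] at this
    exact this.symm
  intro t
  have main : (homLatticeSeq R F ΛY ΛW t = homLatticeSeq R F ΛY ΛW (t + 1)) ↔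
      (homLatticeSeq R F ΛY ΛW (t + m) = homLatticeSeq R F ΛY ΛW (t + m + 1)) := by
    constructor
    · intro h
      apply Submodule.ext; intro f
      rw [key' f t, show t + m + 1 = (t + 1) + m by ring, key' f (t + 1), h]
    · intro h
      apply Submodule.ext; intro f
      rw [key f t, key f (t + 1), show (t + 1) + m = t + m + 1 by ring, h]
  exact not_congr main


/-- If no pair of jumps matches `s`, then `s` is not a jump of the hom sequence. -/
lemma not_jump_hom (ΛY : ℤ → Submodule R Y) (ΛW : ℤ → Submodule R W) (e : ℕ)
    (hseqW : IsLatticeSequence R F ΛW e) (s : ℤ)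
    (h : ∀ i : ℤ, IsJump ΛY i → ¬ IsJump ΛW (i + s)) :
    ¬ IsJump (homLatticeSeq R F ΛY ΛW) s := by
  rw [IsJump, not_not]
  apply Submodule.ext
  intro f
  constructor
  · intro hf i y hy
    by_cases hw : IsJump ΛW (i + s)
    · have hy' : ¬ IsJump ΛY i := fun h' => h i h' hw
      have hYeq : ΛY i = ΛY (i + 1) := not_not.mp hy'
      have hy2 : y ∈ ΛY (i + 1) := hYeq ▸ hy
      have := hf (i + 1) y hy2
      rwa [show (i + 1) + s = i + (s + 1) by ring] at this
    · have hWeq : ΛW (i + s) = ΛW (i + s + 1) := not_not.mp hw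
      rw [show i + (s + 1) = i + s + 1 by ring, ← hWeq]
      exact hf i y hy
  · intro hf i y hy
    have h1 := hf i y hy
    rw [show i + (s + 1) = (i + s) + 1 by ring] at h1
    exact hseqW.decreasing (i + s) h1

/-- Any vector can be scaled into a spanning `R`-submodule by a nonzero ring element. -/
lemma exists_smul_mem (M : Submodule R W) (hM : Submodule.span F (M : Set W) = ⊤) (w : W) :
    ∃ c : R, c ≠ 0 ∧ c • w ∈ M := by
  have hw : w ∈ Submodule.span F (M : Set W) := by rw [hM]; trivial
  induction hw using Submodule.span_induction with
  | mem x hx => exact ⟨1, one_ne_zero, by simpa using hx⟩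
  | zero => exact ⟨1, one_ne_zero, by simp⟩
  | add x y _ _ hx hy =>
    obtain ⟨c, hc, hcm⟩ := hx
    obtain ⟨c', hc', hcm'⟩ := hy
    refine ⟨c * c', mul_ne_zero hc hc', ?_⟩
    rw [smul_add]
    refine add_mem ?_ ?_
    · rw [mul_comm, mul_smul]; exact Submodule.smul_mem _ _ hcm
    · rw [mul_smul]; exact Submodule.smul_mem _ _ hcm'
  | smul a x _ ih =>
    obtain ⟨c, hc, hcm⟩ := ih
    obtain ⟨⟨r, u⟩, hru⟩ := IsLocalization.surj (nonZeroDivisors R) a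
    refine ⟨(u : R) * c, mul_ne_zero (nonZeroDivisors.coe_ne_zero u) hc, ?_⟩
    have hru' : algebraMap R F (u : R) * a = algebraMap R F r := by
      rw [mul_comm]; exact hru
    have hkey : ((u : R) * c) • a • x = r • (c • x) := by
      rw [← algebraMap_smul F ((u : R) * c) (a • x), ← algebraMap_smul F r (c • x),
        ← algebraMap_smul F c x]
      rw [map_mul, smul_smul, smul_smul]
      congr 1
      rw [← hru']
      ring
    rw [hkey]
    exact Submodule.smul_mem _ _ hcm


/-- The hom lattice sequence contains nonzero elements. -/
lemma exists_ne_zero_mem_hom [FiniteDimensional F Y] [Nontrivial W] [Nontrivial Y]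
    (ΛY : ℤ → Submodule R Y) (ΛW : ℤ → Submodule R W) (e : ℕ) (he : 0 < e)
    (hseqY : IsLatticeSequence R F ΛY e) (hseqW : IsLatticeSequence R F ΛW e) (s : ℤ) :
    ∃ f : Y →ₗ[F] W, f ≠ 0 ∧ f ∈ homLatticeSeq R F ΛY ΛW s := by
  classical
  obtain ⟨w₀, hw₀⟩ := exists_ne (0 : W)
  have hfr : 0 < Module.finrank F Y := Module.finrank_pos
  set b := Module.finBasis F Y with hbdef
  set i0 : Fin (Module.finrank F Y) := ⟨0, hfr⟩ with hi0def
  set φ := b.coord i0 with hφdef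
  set f₀ : Y →ₗ[F] W := LinearMap.smulRight φ w₀ with hf₀def
  have hf₀ : f₀ (b i0) = w₀ := by
    simp [hf₀def, hφdef]
  have hf₀0 : f₀ ≠ 0 := by
    intro h
    apply hw₀
    rw [← hf₀, h]
    simp
  -- per-index scaling
  have hper : ∀ i : ℤ, ∃ c : R, c ≠ 0 ∧ ∀ y ∈ ΛY i, c • f₀ y ∈ ΛW (i + s) := by
    intro i
    obtain ⟨S, hS⟩ := (hseqY.lattice i).1
    have hchoice : ∀ y : Y, ∃ c : R, c ≠ 0 ∧ c • f₀ y ∈ ΛW (i + s) := fun y =>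
      exists_smul_mem (ΛW (i + s)) (hseqW.lattice (i + s)).2 (f₀ y)
    choose cf hcf0 hcfm using hchoice
    refine ⟨∏ y ∈ S, cf y, Finset.prod_ne_zero_iff.mpr (fun y _ => hcf0 y), ?_⟩
    intro y hy
    rw [← hS] at hy
    have hle : Submodule.span R (S : Set Y) ≤
        Submodule.comap ((∏ y ∈ S, cf y) • (f₀.restrictScalars R)) (ΛW (i + s)) := by
      rw [Submodule.span_le]
      intro x hx
      rw [Finset.mem_coe] at hx
      simp only [Submodule.mem_comap, LinearMap.smul_apply, LinearMap.restrictScalars_apply,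
        SetLike.mem_coe]
      rw [← Finset.mul_prod_erase S cf hx, mul_comm, mul_smul]
      exact Submodule.smul_mem _ _ (hcfm x)
    have := hle hy
    simpa using this
  choose cf2 hcf20 hcf2m using hper
  set C : R := ∏ n ∈ Finset.range e, cf2 (n : ℤ) with hCdef
  have hC0 : C ≠ 0 := Finset.prod_ne_zero_iff.mpr (fun n _ => hcf20 _)
  refine ⟨C • f₀, ?_, ?_⟩
  · intro h
    have h1 : (C • f₀) (b i0) = 0 := by rw [h]; simp
    rw [LinearMap.smul_apply, hf₀] at h1
    have h2 : algebraMap R F C • w₀ = 0 := by rwa [algebraMap_smul]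
    rcases smul_eq_zero.mp h2 with h3 | h3
    · exact hC0 ((map_eq_zero_iff _ (IsFractionRing.injective R F)).mp h3)
    · exact hw₀ h3
  · -- membership in the hom lattice sequence
    set Pred : ℤ → Prop := fun i => ∀ y ∈ ΛY i, (C • f₀) y ∈ ΛW (i + s) with hPreddef
    have step : ∀ i : ℤ, Pred i ↔ Pred (i + (e : ℤ)) := by
      intro i
      constructor
      · intro hp y hy
        rw [hseqY.period i] at hy
        rw [show i + (e : ℤ) + s = (i + s) + (e : ℤ) by ring, hseqW.period (i + s)]
        refine Submodule.smul_induction_on hy ?_ ?_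
        · intro r hr x hx
          rw [LinearMap.map_smul_of_tower]
          exact Submodule.smul_mem_smul hr (hp x hx)
        · intro x y' hx hy'
          rw [map_add]
          exact add_mem hx hy'
      · intro hp y hy
        obtain ⟨π, hπ⟩ := IsDiscreteValuationRing.exists_irreducible R
        have hmax : IsLocalRing.maximalIdeal R = Ideal.span {π} :=
          (IsDiscreteValuationRing.irreducible_iff_uniformizer π).mp hπ
        have hπy : π • y ∈ ΛY (i + (e : ℤ)) := by
          rw [hseqY.period i]
          exact Submodule.smul_mem_smul (hmax ▸ Ideal.mem_span_singleton_self π) hy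
        have h2 := hp (π • y) hπy
        rw [LinearMap.map_smul_of_tower] at h2
        rw [show i + (e : ℤ) + s = (i + s) + (e : ℤ) by ring, hseqW.period (i + s),
          hmax, Submodule.ideal_span_singleton_smul] at h2
        have h4 : π • ((C • f₀) y) ∈ π • (ΛW (i + s) : Set W) := by
          rw [← Submodule.coe_pointwise_smul]
          exact h2
        obtain ⟨x, hx, hxe⟩ := Set.mem_smul_set.mp h4
        have hππ : algebraMap R F π ≠ 0 := fun h =>
          hπ.ne_zero ((map_eq_zero_iff _ (IsFractionRing.injective R F)).mp h)
        have hxeq : x = (C • f₀) y := by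
          have h5 : (algebraMap R F π) • x = (algebraMap R F π) • ((C • f₀) y) := by
            rw [algebraMap_smul, algebraMap_smul]
            exact hxe
          exact smul_right_injective W hππ h5
        rw [← hxeq]
        exact hx
    have base : ∀ n : ℕ, n < e → Pred (n : ℤ) := by
      intro n hn y hy
      rw [LinearMap.smul_apply, hCdef,
        ← Finset.mul_prod_erase (Finset.range e) _ (Finset.mem_range.mpr hn),
        mul_comm, mul_smul]
      exact Submodule.smul_mem _ _ (hcf2m (n : ℤ) y hy)
    have hall : ∀ i : ℤ, Pred i := by
      intro i
      have he' : (0 : ℤ) < (e : ℤ) := by exact_mod_cast he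
      have h1 : 0 ≤ i % (e : ℤ) := Int.emod_nonneg i (by omega)
      have h2 : i % (e : ℤ) < (e : ℤ) := Int.emod_lt_of_pos i he'
      have hbase : Pred (i % (e : ℤ)) := by
        have := base (i % (e : ℤ)).toNat (by omega)
        rwa [Int.toNat_of_nonneg h1] at this
      have hiter := iterate_iff Pred (e : ℤ) step (i / (e : ℤ)) (i % (e : ℤ))
      rw [show i % (e : ℤ) + i / (e : ℤ) * (e : ℤ) = i by
        rw [mul_comm]; exact Int.emod_add_mul_ediv i (e : ℤ)] at hiter
      exact hiter.mp hbase
    exact fun i y hy => hall i y hy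


/-- The hom lattice sequence always has a jump. -/
lemma exists_jump_hom [FiniteDimensional F Y] [Nontrivial W] [Nontrivial Y]
    (ΛY : ℤ → Submodule R Y) (ΛW : ℤ → Submodule R W) (e : ℕ) (he : 0 < e)
    (hseqY : IsLatticeSequence R F ΛY e) (hseqW : IsLatticeSequence R F ΛW e) :
    ∃ t : ℤ, IsJump (homLatticeSeq R F ΛY ΛW) t := by
  by_contra hno
  push_neg at hno
  have hconst : ∀ a b : ℤ, a ≤ b →
      homLatticeSeq R F ΛY ΛW a = homLatticeSeq R F ΛY ΛW b :=
    fun a b hab => const_of_no_jump _ a b hab (fun t _ _ => hno t)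
  obtain ⟨f, hf0, hfmem⟩ := exists_ne_zero_mem_hom ΛY ΛW e he hseqY hseqW 0
  have hy : ∃ y ∈ ΛY 0, f y ≠ 0 := by
    by_contra h'
    push_neg at h'
    apply hf0
    have hker : Submodule.span F ((ΛY 0 : Set Y)) ≤ LinearMap.ker f := by
      rw [Submodule.span_le]
      intro y hyy
      simpa [LinearMap.mem_ker] using h' y hyy
    rw [(hseqY.lattice 0).2] at hker
    ext y
    have : y ∈ LinearMap.ker f := hker trivial
    simpa using this
  obtain ⟨y, hyΛ, hfy⟩ := hy
  have hpow : ∀ (k : ℕ) (i : ℤ), ΛW (i + (k : ℤ) * (e : ℤ)) =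
      ((IsLocalRing.maximalIdeal R) ^ k) • ΛW i := by
    intro k
    induction k with
    | zero => intro i; simp
    | succ k ih =>
      intro i
      rw [show ((k + 1 : ℕ) : ℤ) * (e : ℤ) = (k : ℤ) * (e : ℤ) + (e : ℤ) by push_cast; ring,
        ← add_assoc, show i + (k : ℤ) * (e : ℤ) + (e : ℤ)
          = (i + (k : ℤ) * (e : ℤ)) + (e : ℤ) by ring,
        hseqW.period (i + (k : ℤ) * (e : ℤ)), ih i, pow_succ']
      rw [mul_smul]
  -- f y lies in all powers
  have hins : ∀ k : ℕ, f y ∈ ((IsLocalRing.maximalIdeal R) ^ k) • ΛW (0 : ℤ) := by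
    intro k
    have h1 : f ∈ homLatticeSeq R F ΛY ΛW ((k : ℤ) * (e : ℤ)) := by
      rw [← hconst 0 ((k : ℤ) * (e : ℤ)) (by positivity)]
      exact hfmem
    have h2 := h1 0 y hyΛ
    rwa [hpow k 0] at h2
  -- elementary Krull-type argument over the DVR
  have hfyL : f y ∈ ΛW (0 : ℤ) := by simpa using hins 0
  set L := ΛW (0 : ℤ) with hLdef
  have hFG : L.FG := (hseqW.lattice 0).1
  have hNoeth : IsNoetherian R L := isNoetherian_of_fg_of_noetherian _ hFG
  obtain ⟨π, hπ⟩ := IsDiscreteValuationRing.exists_irreducible R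
  have hmax : IsLocalRing.maximalIdeal R = Ideal.span {π} :=
    (IsDiscreteValuationRing.irreducible_iff_uniformizer π).mp hπ
  have hππ : algebraMap R F π ≠ 0 := fun h =>
    hπ.ne_zero ((map_eq_zero_iff _ (IsFractionRing.injective R F)).mp h)
  have hx : ∀ k : ℕ, ∃ x, x ∈ L ∧ (π ^ k) • x = f y := by
    intro k
    have h1 := hins k
    rw [hmax, Ideal.span_singleton_pow, Submodule.ideal_span_singleton_smul] at h1
    have h2 : f y ∈ (π ^ k) • (L : Set W) := by
      rw [← Submodule.coe_pointwise_smul]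
      exact h1
    obtain ⟨x, hxL, hxe⟩ := Set.mem_smul_set.mp h2
    exact ⟨x, hxL, hxe⟩
  choose x hxL hxe using hx
  have hcancel : ∀ k : ℕ, π • x (k + 1) = x k := by
    intro k
    have h1 : (π ^ k) • (π • x (k + 1)) = (π ^ k) • x k := by
      rw [smul_smul, ← pow_succ, hxe (k + 1), hxe k]
    have h2 : algebraMap R F (π ^ k) ≠ 0 := by
      rw [map_pow]
      exact pow_ne_zero _ hππ
    have h3 : (algebraMap R F (π ^ k)) • (π • x (k + 1)) = (algebraMap R F (π ^ k)) • x k := by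
      rw [algebraMap_smul, algebraMap_smul]
      exact h1
    exact smul_right_injective W h2 h3
  set xL : ℕ → L := fun k => ⟨x k, hxL k⟩ with hxLdef
  have hcancelL : ∀ k, (π : R) • xL (k + 1) = xL k := by
    intro k
    apply Subtype.ext
    simpa using hcancel k
  have hmono : Monotone (fun k => Submodule.span R {xL k}) := by
    apply monotone_nat_of_le_succ
    intro k
    rw [Submodule.span_le]
    intro z hz
    rw [Set.mem_singleton_iff] at hz
    subst hz
    rw [← hcancelL k]
    exact Submodule.smul_mem _ π (Submodule.mem_span_singleton_self _)
  obtain ⟨K, hK⟩ := monotone_stabilizes_iff_noetherian.mpr hNoeth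
    ⟨fun k => Submodule.span R {xL k}, hmono⟩
  have h3 : xL (K + 1) ∈ Submodule.span R {xL K} := by
    have := hK (K + 1) (by omega)
    simp only [OrderHom.coe_mk] at this
    rw [this]
    exact Submodule.mem_span_singleton_self _
  obtain ⟨r, hr⟩ := Submodule.mem_span_singleton.mp h3
  have h4 : (1 - r * π) • xL (K + 1) = 0 := by
    have h5 : (r * π) • xL (K + 1) = xL (K + 1) := by
      rw [mul_smul, hcancelL K, hr]
    rw [sub_smul, one_smul, h5, sub_self]
  have hunit : IsUnit (1 - r * π) := by
    apply IsLocalRing.isUnit_one_sub_self_of_mem_nonunits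
    rw [← IsLocalRing.mem_maximalIdeal, hmax]
    exact Ideal.mul_mem_left _ r (Ideal.mem_span_singleton_self π)
  obtain ⟨u, hu⟩ := hunit
  have h6 : xL (K + 1) = 0 := by
    have h7 : ((↑u⁻¹ * ↑u : R)) • xL (K + 1) = 0 := by
      rw [mul_smul, hu, h4, smul_zero]
    rwa [Units.inv_mul, one_smul] at h7
  apply hfy
  have h8 : x (K + 1) = 0 := by simpa [hxLdef] using Subtype.ext_iff.mp h6
  rw [← hxe (K + 1), h8, smul_zero]

end AuxMain


lemma NT (e eW rY k : ℕ) (he : 0 < e) (heW : 0 < eW) (hrY : 0 < rY)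
    (hk : e = 2 * eW * k) (hdvd3 : rY ∣ e) :
    (Nat.gcd (e / rY) (e / eW) ∣ k ↔ padicValNat 2 eW < padicValNat 2 rY) ∧
    (¬ padicValNat 2 eW < padicValNat 2 rY →
      2 ∣ Nat.gcd (e / rY) (e / eW) ∧
      ∃ j : ℕ, 2 * k = Nat.gcd (e / rY) (e / eW) + 2 * Nat.gcd (e / rY) (e / eW) * j) := by
  have hk0 : k ≠ 0 := by rintro rfl; omega
  have he0 : e ≠ 0 := he.ne'
  have heW' : eW ∣ e := ⟨2 * k, by rw [hk]; ring⟩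
  have h2eW' : 2 * eW ∣ e := ⟨k, hk⟩
  set d' := e / rY with hd'def
  set d := e / eW with hddef
  have hd : d = 2 * k := by
    have : e = eW * (2 * k) := by rw [hk]; ring
    rw [hddef, this, Nat.mul_div_cancel_left _ heW]
  have hd0 : d ≠ 0 := by omega
  have hd'0 : d' ≠ 0 := (Nat.div_pos (Nat.le_of_dvd he hdvd3) hrY).ne'
  set g := Nat.gcd d' d with hgdef
  have hgd : g ∣ d := Nat.gcd_dvd_right _ _
  have hg0 : g ≠ 0 := Nat.gcd_ne_zero_right hd0
  -- factorization facts at 2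
  have ha : d'.factorization 2 = e.factorization 2 - rY.factorization 2 := by
    rw [hd'def, Nat.factorization_div hdvd3]; simp
  have hb : d.factorization 2 = e.factorization 2 - eW.factorization 2 := by
    rw [hddef, Nat.factorization_div heW']; simp
  have hrYe : rY.factorization 2 ≤ e.factorization 2 :=
    Finsupp.le_def.mp ((Nat.factorization_le_iff_dvd hrY.ne' he0).mpr hdvd3) 2
  have h1eW : 1 + eW.factorization 2 ≤ e.factorization 2 := by
    have h := Finsupp.le_def.mp
      ((Nat.factorization_le_iff_dvd (by positivity) he0).mpr h2eW') 2
    rwa [Nat.factorization_mul two_ne_zero heW.ne', Finsupp.add_apply,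
      Nat.Prime.factorization Nat.prime_two, Finsupp.single_apply, if_pos rfl] at h
  have hgfact : g.factorization 2 = min (d'.factorization 2) (d.factorization 2) := by
    rw [hgdef, Nat.factorization_gcd hd'0 hd0, Finsupp.inf_apply]
  have keyf : 2 * g ∣ d ↔ d'.factorization 2 < d.factorization 2 := by
    rw [← Nat.factorization_le_iff_dvd (by positivity) hd0,
      Nat.factorization_mul two_ne_zero hg0, Nat.factorization_gcd hd'0 hd0]
    constructor
    · intro h
      have h2 := Finsupp.le_def.mp h 2
      rw [Finsupp.add_apply, Nat.Prime.factorization Nat.prime_two, Finsupp.single_apply,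
        if_pos rfl, Finsupp.inf_apply] at h2
      have : min (d'.factorization 2) (d.factorization 2) < d.factorization 2 := by omega
      rcases min_lt_iff.mp this with h' | h'
      · exact h'
      · exact absurd h' (lt_irrefl _)
    · intro h
      rw [Finsupp.le_def]
      intro p
      rw [Finsupp.add_apply, Nat.Prime.factorization Nat.prime_two, Finsupp.single_apply,
        Finsupp.inf_apply]
      by_cases hp : (2 : ℕ) = p
      · subst hp
        rw [if_pos rfl]
        have : min (d'.factorization 2) (d.factorization 2) ≤ d'.factorization 2 := min_le_left _ _
        have : min (d'.factorization 2) (d.factorization 2) ≤ d.factorization 2 := min_le_right _ _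
        omega
      · rw [if_neg hp, zero_add]
        exact min_le_right _ _
  have hpart1 : g ∣ k ↔ padicValNat 2 eW < padicValNat 2 rY := by
    rw [← Nat.factorization_def eW Nat.prime_two, ← Nat.factorization_def rY Nat.prime_two]
    constructor
    · intro h
      have : 2 * g ∣ 2 * k := mul_dvd_mul_left 2 h
      rw [← hd] at this
      have := keyf.mp this
      omega
    · intro h
      have : 2 * g ∣ d := keyf.mpr (by omega)
      rw [hd] at this
      exact (Nat.mul_dvd_mul_iff_left (by norm_num : 0 < 2)).mp this
  refine ⟨hpart1, fun hn => ?_⟩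
  rw [← Nat.factorization_def eW Nat.prime_two, ← Nat.factorization_def rY Nat.prime_two] at hn
  have hba : d.factorization 2 ≤ d'.factorization 2 := by omega
  have hg2 : 1 ≤ g.factorization 2 := by omega
  have h2g : 2 ∣ g := (Nat.Prime.dvd_iff_one_le_factorization Nat.prime_two hg0).mpr hg2
  refine ⟨h2g, ?_⟩
  set m := d / g with hmdef
  have hm : g * m = d := Nat.mul_div_cancel' hgd
  have hm0 : m ≠ 0 := by intro h0; rw [h0, mul_zero] at hm; omega
  have hmf : m.factorization 2 = 0 := by
    rw [hmdef, Nat.factorization_div hgd]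
    simp only [Finsupp.tsub_apply]
    omega
  have hmodd : ¬ 2 ∣ m := by
    intro h2m
    have := (Nat.Prime.dvd_iff_one_le_factorization Nat.prime_two hm0).mp h2m
    omega
  obtain ⟨j, hj⟩ : ∃ j, m = 2 * j + 1 := ⟨m / 2, by omega⟩
  exact ⟨j, by rw [← hd, ← hm, hj]; ring⟩



/-- Let `Λ_{W,0}`, `Λ_{W,1}` be principal lattice sequences of period `e` in `W` with jump
sets `(e/e_W)ℤ` and `e/(2e_W) + (e/e_W)ℤ`, and `Λ_Y` one in `Y` with jump set
`a_Y + (e/r_Y)ℤ`. Then `𝒞₀ = 𝒞(Λ_Y, Λ_{W,0})` and `𝒞₁ = 𝒞(Λ_Y, Λ_{W,1})` have the same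
jumps iff `v₂(e_W) < v₂(r_Y)`; otherwise the jumps of `𝒞₁` are those of `𝒞₀` shifted by
`(1/2)·gcd(e/r_Y, e/e_W)`. -/
theorem stmt14
    (R : Type*) [CommRing R] [IsDomain R] [IsDiscreteValuationRing R]
    (F : Type*) [Field F] [Algebra R F] [IsFractionRing R F]
    (W Y : Type*)
    [AddCommGroup W] [Module R W] [Module F W] [IsScalarTower R F W]
    [AddCommGroup Y] [Module R Y] [Module F Y] [IsScalarTower R F Y]
    [FiniteDimensional F W] [FiniteDimensional F Y] [Nontrivial W] [Nontrivial Y]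
    (e eW rY : ℕ) (he : 0 < e) (heW : 0 < eW) (hrY : 0 < rY)
    (hdvd1 : eW ∣ e) (hdvd2 : 2 * eW ∣ e) (hdvd3 : rY ∣ e)
    (ΛW0 ΛW1 : ℤ → Submodule R W) (ΛY : ℤ → Submodule R Y)
    (hseq0 : IsLatticeSequence R F ΛW0 e) (hseq1 : IsLatticeSequence R F ΛW1 e)
    (hseqY : IsLatticeSequence R F ΛY e)
    (hpr0 : IsPrincipalSequence R F ΛW0) (hpr1 : IsPrincipalSequence R F ΛW1)
    (hprY : IsPrincipalSequence R F ΛY)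
    (aY : ℤ)
    (hj0 : ∀ t : ℤ, IsJump ΛW0 t ↔ ∃ z : ℤ, t = ((e / eW : ℕ) : ℤ) * z)
    (hj1 : ∀ t : ℤ, IsJump ΛW1 t ↔
      ∃ z : ℤ, t = ((e / (2 * eW) : ℕ) : ℤ) + ((e / eW : ℕ) : ℤ) * z)
    (hjY : ∀ t : ℤ, IsJump ΛY t ↔ ∃ z : ℤ, t = aY + ((e / rY : ℕ) : ℤ) * z) :
    ((∀ t : ℤ, IsJump (homLatticeSeq R F ΛY ΛW0) t ↔ IsJump (homLatticeSeq R F ΛY ΛW1) t) ↔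
      padicValNat 2 eW < padicValNat 2 rY) ∧
    (¬ padicValNat 2 eW < padicValNat 2 rY →
      2 ∣ Nat.gcd (e / rY) (e / eW) ∧
      ∀ t : ℤ, IsJump (homLatticeSeq R F ΛY ΛW1) t ↔
        IsJump (homLatticeSeq R F ΛY ΛW0) (t - (Nat.gcd (e / rY) (e / eW) : ℤ) / 2)) := by
  obtain ⟨k, hk⟩ := hdvd2
  have hkpos : 0 < k := by
    rcases Nat.eq_zero_or_pos k with h | h
    · subst h; omega
    · exact h
  set d : ℕ := e / eW with hddef
  set d' : ℕ := e / rY with hd'def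
  have hd2k : d = 2 * k := by
    rw [hddef, hk, show 2 * eW * k = eW * (2 * k) by ring]
    exact Nat.mul_div_cancel_left _ heW
  have hhk : e / (2 * eW) = k := by
    rw [hk]
    exact Nat.mul_div_cancel_left _ (by positivity)
  have hd'pos : 0 < d' := Nat.div_pos (Nat.le_of_dvd he hdvd3) hrY
  have hdpos : 0 < d := by omega
  set g : ℕ := Nat.gcd d' d with hgdef
  have hj1' : ∀ t : ℤ, IsJump ΛW1 t ↔ ∃ z : ℤ, t = (k : ℤ) + (d : ℤ) * z := by
    intro t
    rw [hj1 t, hhk]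
  -- principal maps carried to full period-translations
  obtain ⟨P0, hP0⟩ := hpr0
  obtain ⟨P1, hP1⟩ := hpr1
  obtain ⟨Q, hQ⟩ := hprY
  have hmap0 := map_eq_of_jumpset ΛW0 P0 d hdpos 0
    (fun t => by rw [hj0 t]; simp) hP0
  have hmap1 := map_eq_of_jumpset ΛW1 P1 d hdpos (k : ℤ) hj1' hP1
  have hmapQ := map_eq_of_jumpset ΛY Q d' hd'pos aY hjY hQ
  have T0d := jump_translate_W ΛY ΛW0 P0 (d : ℤ) hmap0
  have T0d' := jump_translate_Y ΛY ΛW0 Q (d' : ℤ) hmapQ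
  have T1d := jump_translate_W ΛY ΛW1 P1 (d : ℤ) hmap1
  have T1d' := jump_translate_Y ΛY ΛW1 Q (d' : ℤ) hmapQ
  -- invariance under multiples of g
  have hgz : ∀ (J : ℤ → Prop), (∀ t, J t ↔ J (t + (d : ℤ))) →
      (∀ t, J t ↔ J (t + (d' : ℤ))) → ∀ (z t : ℤ), J t ↔ J (t + z * (g : ℤ)) := by
    intro J h1 h2 z t
    have hbez : (g : ℤ) = (d' : ℤ) * Nat.gcdA d' d + (d : ℤ) * Nat.gcdB d' d :=
      Nat.gcd_eq_gcd_ab d' d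
    have i1 := iterate_iff J (d : ℤ) h1 (z * Nat.gcdB d' d) t
    have i2 := iterate_iff J (d' : ℤ) h2 (z * Nat.gcdA d' d)
      (t + z * Nat.gcdB d' d * (d : ℤ))
    rw [show t + z * Nat.gcdB d' d * (d : ℤ) + z * Nat.gcdA d' d * (d' : ℤ)
        = t + z * (g : ℤ) by rw [hbez]; ring] at i2
    exact i1.trans i2
  have hgd : (g : ℤ) ∣ (d : ℤ) := Int.natCast_dvd_natCast.mpr (Nat.gcd_dvd_right d' d)
  have hgd' : (g : ℤ) ∣ (d' : ℤ) := Int.natCast_dvd_natCast.mpr (Nat.gcd_dvd_left d' d)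
  -- jumps lie in the expected cosets
  have hsub0 : ∀ t, IsJump (homLatticeSeq R F ΛY ΛW0) t → (g : ℤ) ∣ t + aY := by
    intro t ht
    by_contra hdvd
    refine not_jump_hom ΛY ΛW0 e hseq0 t ?_ ht
    intro i hiY hiW
    obtain ⟨z1, hz1⟩ := (hjY i).mp hiY
    obtain ⟨z2, hz2⟩ := (hj0 (i + t)).mp hiW
    apply hdvd
    have heq : t + aY = (d : ℤ) * z2 - (d' : ℤ) * z1 := by
      rw [hz1] at hz2; linarith
    rw [heq]
    exact dvd_sub (hgd.mul_right z2) (hgd'.mul_right z1)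
  have hsub1 : ∀ t, IsJump (homLatticeSeq R F ΛY ΛW1) t → (g : ℤ) ∣ t + aY - (k : ℤ) := by
    intro t ht
    by_contra hdvd
    refine not_jump_hom ΛY ΛW1 e hseq1 t ?_ ht
    intro i hiY hiW
    obtain ⟨z1, hz1⟩ := (hjY i).mp hiY
    obtain ⟨z2, hz2⟩ := (hj1' (i + t)).mp hiW
    apply hdvd
    have heq : t + aY - (k : ℤ) = (d : ℤ) * z2 - (d' : ℤ) * z1 := by
      rw [hz1] at hz2; linarith
    rw [heq]
    exact dvd_sub (hgd.mul_right z2) (hgd'.mul_right z1)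
  -- nonemptiness of jump sets
  obtain ⟨t0, ht0⟩ := exists_jump_hom ΛY ΛW0 e he hseqY hseq0
  obtain ⟨t1, ht1⟩ := exists_jump_hom ΛY ΛW1 e he hseqY hseq1
  -- full characterizations
  have hchar0 : ∀ t, IsJump (homLatticeSeq R F ΛY ΛW0) t ↔ (g : ℤ) ∣ t + aY := by
    intro t
    refine ⟨hsub0 t, ?_⟩
    intro hdv
    have hd0 := hsub0 t0 ht0
    obtain ⟨z, hz⟩ : ∃ z : ℤ, t = t0 + z * (g : ℤ) := by
      obtain ⟨z, hz⟩ := dvd_sub hdv hd0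
      exact ⟨z, by linarith [hz, mul_comm (g : ℤ) z]⟩
    rw [hz]
    exact (hgz _ T0d T0d' z t0).mp ht0
  have hchar1 : ∀ t, IsJump (homLatticeSeq R F ΛY ΛW1) t ↔ (g : ℤ) ∣ t + aY - (k : ℤ) := by
    intro t
    refine ⟨hsub1 t, ?_⟩
    intro hdv
    have hd1 := hsub1 t1 ht1
    obtain ⟨z, hz⟩ : ∃ z : ℤ, t = t1 + z * (g : ℤ) := by
      obtain ⟨z, hz⟩ := dvd_sub hdv hd1
      exact ⟨z, by linarith [hz, mul_comm (g : ℤ) z]⟩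
    rw [hz]
    exact (hgz _ T1d T1d' z t1).mp ht1
  -- number theory
  obtain ⟨NT1, NT2⟩ := NT e eW rY k he heW hrY hk hdvd3
  constructor
  · constructor
    · intro H
      have h1 : IsJump (homLatticeSeq R F ΛY ΛW0) (-aY) := (hchar0 (-aY)).mpr (by simp)
      have h2 := (H (-aY)).mp h1
      have h3 := (hchar1 (-aY)).mp h2
      rw [show -aY + aY - (k : ℤ) = -(k : ℤ) by ring, dvd_neg] at h3
      exact NT1.mp (Int.natCast_dvd_natCast.mp h3)
    · intro hv t
      have hgk : (g : ℤ) ∣ (k : ℤ) := Int.natCast_dvd_natCast.mpr (NT1.mpr hv)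
      rw [hchar0 t, hchar1 t]
      constructor
      · intro h
        exact dvd_sub h hgk
      · intro h
        have h2 := dvd_add h hgk
        rwa [show t + aY - (k : ℤ) + (k : ℤ) = t + aY by ring] at h2
  · intro hn
    obtain ⟨h2g, j, hj2⟩ := NT2 hn
    refine ⟨h2g, ?_⟩
    intro t
    obtain ⟨G2, hG2⟩ := h2g
    have hG2' : g = 2 * G2 := hG2
    have hj2' : 2 * k = g + 2 * g * j := hj2
    have hcast : ((g : ℕ) : ℤ) / 2 = (G2 : ℤ) := by
      rw [hG2']; push_cast; omega
    have hkG : (g : ℤ) ∣ (k : ℤ) - (G2 : ℤ) := by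
      refine ⟨j, ?_⟩
      have h1 : (2 : ℤ) * k = g + 2 * g * j := by exact_mod_cast hj2'
      have h2 : (g : ℤ) = 2 * G2 := by exact_mod_cast hG2'
      linarith [h1, h2]
    rw [hchar1 t, hchar0 (t - ((g : ℕ) : ℤ) / 2), hcast]
    constructor
    · intro h
      have h2 := dvd_add h hkG
      rwa [show t + aY - (k : ℤ) + ((k : ℤ) - (G2 : ℤ)) = t - (G2 : ℤ) + aY by ring] at h2
    · intro h
      have h2 := dvd_sub h hkG
      rwa [show t - (G2 : ℤ) + aY - ((k : ℤ) - (G2 : ℤ)) = t + aY - (k : ℤ) by ring] at h2
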